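/- Let c ∈ ℝ, r > 0, ε > 0 and α(ε) = (e^ε + 1)/(e^ε − 1). Suppose γ1 < γ2 are real numbers and p : [c−r, c+r] → [0,1] satisfy: (C1, unbiasedness) p(w)·γ1 + (1−p(w))·γ2 = w for all w ∈ [c−r, c+r]; (C2, ε-LDP) p(w) ≤ e^ε·p(w′) and 1−p(w) ≤ e^ε·(1−p(w′)) for all w, w′ ∈ [c−r, c+r]. Then p(w) = (γ2 − w)/(γ2 − γ1) for all w ∈ [c−r, c+r], and moreover γ2 ≥ c + r·α(ε) and γ1 ≤ c − r·α(ε). -/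

import Mathlib

open Real Set

noncomputable def alphaFn (ε : ℝ) : ℝ := (Real.exp ε + 1) / (Real.exp ε - 1)

/-!
Unbiasedness alone pins down `p(w) = (γ2 − w)/(γ2 − γ1)`, an affine function of `w`.
The `ε`-LDP constraint, applied between the two endpoints `c ∓ r` of the interval, then reads
`(γ2 − c) + r ≤ e^ε ((γ2 − c) − r)` (and symmetrically for `c − γ1`), which solves to
`r·α(ε) ≤ γ2 − c` since `e^ε > 1`.
-/

lemma eq_div_of_mul_add_one_sub_mul_eq {γ1 γ2 p w : ℝ} (hγ : γ1 < γ2)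
    (h : p * γ1 + (1 - p) * γ2 = w) : p = (γ2 - w) / (γ2 - γ1) := by
  rw [eq_div_iff (sub_pos.2 hγ).ne']
  linarith

lemma one_sub_div_sub {γ1 γ2 w : ℝ} (hγ : γ1 ≠ γ2) :
    1 - (γ2 - w) / (γ2 - γ1) = (w - γ1) / (γ2 - γ1) := by
  field_simp [sub_ne_zero.2 hγ.symm]
  ring

lemma le_mul_of_div_le_mul_div {a b k d : ℝ} (hd : 0 < d) (h : a / d ≤ k * (b / d)) :
    a ≤ k * b := by
  rwa [← mul_div_assoc, div_le_div_iff_of_pos_right hd] at h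

lemma mul_alphaFn_le_of_add_le_exp_mul_sub {ε r x : ℝ} (hε : 0 < ε)
    (h : x + r ≤ Real.exp ε * (x - r)) : r * alphaFn ε ≤ x := by
  have he : 0 < Real.exp ε - 1 := sub_pos.2 (one_lt_exp_iff.2 hε)
  rw [alphaFn, ← mul_div_assoc, div_le_iff₀ he]
  linarith

theorem stmt1 (c r ε : ℝ) (hr : 0 < r) (hε : 0 < ε)
    (γ1 γ2 : ℝ) (p : ℝ → ℝ) (hγ : γ1 < γ2)
    (hC1 : ∀ w ∈ Icc (c - r) (c + r), p w * γ1 + (1 - p w) * γ2 = w)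
    (hC2 : ∀ w ∈ Icc (c - r) (c + r), ∀ w' ∈ Icc (c - r) (c + r),
      p w ≤ Real.exp ε * p w' ∧ 1 - p w ≤ Real.exp ε * (1 - p w')) :
    (∀ w ∈ Icc (c - r) (c + r), p w = (γ2 - w) / (γ2 - γ1)) ∧
      c + r * alphaFn ε ≤ γ2 ∧ γ1 ≤ c - r * alphaFn ε := by
  have hp : ∀ w ∈ Icc (c - r) (c + r), p w = (γ2 - w) / (γ2 - γ1) :=
    fun w hw ↦ eq_div_of_mul_add_one_sub_mul_eq hγ (hC1 w hw)
  have hlo : c - r ∈ Icc (c - r) (c + r) := left_mem_Icc.2 (by linarith)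
  have hhi : c + r ∈ Icc (c - r) (c + r) := right_mem_Icc.2 (by linarith)
  have hd : 0 < γ2 - γ1 := sub_pos.2 hγ
  refine ⟨hp, ?_, ?_⟩
  · have h := (hC2 (c - r) hlo (c + r) hhi).1
    rw [hp _ hlo, hp _ hhi] at h
    have := le_mul_of_div_le_mul_div hd h
    linarith [mul_alphaFn_le_of_add_le_exp_mul_sub (x := γ2 - c) (r := r) hε (by linarith)]
  · have h := (hC2 (c + r) hhi (c - r) hlo).2
    rw [hp _ hlo, hp _ hhi, one_sub_div_sub hγ.ne, one_sub_div_sub hγ.ne] at h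
    have := le_mul_of_div_le_mul_div hd h
    linarith [mul_alphaFn_le_of_add_le_exp_mul_sub (x := c - γ1) (r := r) hε (by linarith)]
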